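/- Let Γ = (V,R) be a graph, let φ be a continuous automorphism of G_Γ, and let f be the automorphism of Γ determined by φ(ker(π_v)) = ker(π_{f(v)}) for all v ∈ V (such an f exists and is unique, since the subgroups ker(π_v) are exactly the open normal subgroups of G_Γ with quotient isomorphic to D_p, and adjacency corresponds to the existence of a common refinement with quotient W). Then there exist automorphisms σ_v ∈ Aut(D_p) for each v ∈ V and σ_r ∈ Aut(W) for each r ∈ R such that φ = σ̄ ∘ φ_f, where φ_f((a_v)_{v∈V}, (b_r)_{r∈R}) = ((a_{f⁻¹(v)})_{v∈V}, (b_{f⁻¹(r)})_{r∈R}) is the coordinate-change automorphism associated to f and σ̄((a_v)_{v∈V}, (b_r)_{r∈R}) = ((σ_v(a_v))_{v∈V}, (σ_r(b_r))_{r∈R}). -/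

import Mathlib

open Function

noncomputable section

/-- A discrete group is a topological group. -/
instance (priority := 50) discreteTopologicalGroup (G : Type*) [Group G] [TopologicalSpace G]
    [DiscreteTopology G] : IsTopologicalGroup G where
  continuous_mul := continuous_of_discreteTopology
  continuous_inv := continuous_of_discreteTopology

/-- The sign epimorphism `τ : D_p → C_2 = {±1}` killing the rotations. -/
def dihedralSign (p : ℕ) : DihedralGroup p →* ℤˣ where
  toFun x := match x with
    | DihedralGroup.r _ => 1
    | DihedralGroup.sr _ => -1
  map_one' := rfl
  map_mul' a b := by cases a <;> cases b <;> rfl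

/-- `{±1}` acts on a commutative group by exponentiation (i.e. `-1` acts by inversion). -/
def unitsIntAut (A : Type*) [CommGroup A] : ℤˣ →* MulAut A where
  toFun u :=
    { toFun := fun x => x ^ (u : ℤ)
      invFun := fun x => x ^ (u : ℤ)
      left_inv := fun x => by rcases Int.units_eq_one_or u with h | h <;> simp [h]
      right_inv := fun x => by rcases Int.units_eq_one_or u with h | h <;> simp [h]
      map_mul' := fun x y => mul_zpow x y _ }
  map_one' := by ext x; simp
  map_mul' u v := by
    ext x
    rcases Int.units_eq_one_or u with h | h <;>
      rcases Int.units_eq_one_or v with h' | h' <;>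
        simp [h, h']

/-- The action of `D_p × D_p` on `C_q` given by `(x,y) · g = g^(τ(x)τ(y))`. -/
def Wact (p q : ℕ) : DihedralGroup p × DihedralGroup p →* MulAut (Multiplicative (ZMod q)) :=
  (unitsIntAut (Multiplicative (ZMod q))).comp
    (((dihedralSign p).comp (MonoidHom.fst _ _)) * ((dihedralSign p).comp (MonoidHom.snd _ _)))

/-- The group `W = C_q ⋊ (D_p × D_p)`. -/
abbrev Wgrp (p q : ℕ) : Type :=
  SemidirectProduct (Multiplicative (ZMod q)) (DihedralGroup p × DihedralGroup p) (Wact p q)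

/-- The quotient map `λ : W → D_p × D_p`. -/
abbrev lamW (p q : ℕ) : Wgrp p q →* DihedralGroup p × DihedralGroup p :=
  SemidirectProduct.rightHom

/-- The group `G_Γ ≤ D_p^V × W^R` associated to a graph `Γ = (V, R)`. -/
def GGamma (p q : ℕ) (V : Type*) (R : Set (V × V)) :
    Subgroup ((V → DihedralGroup p) × (R → Wgrp p q)) where
  carrier := {x | ∀ r : R,
    SemidirectProduct.rightHom (x.2 r) = (x.1 (r : V × V).1, x.1 (r : V × V).2)}
  one_mem' := by intro r; simp; rfl
  mul_mem' := by
    intro a b ha hb r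
    simp only [Set.mem_setOf_eq] at ha hb
    simp only [Prod.snd_mul, Pi.mul_apply, map_mul, Prod.fst_mul, ha r, hb r, Prod.mk_mul_mk]
  inv_mem' := by
    intro a ha r
    simp only [Set.mem_setOf_eq] at ha
    simp only [Prod.snd_inv, Pi.inv_apply, map_inv, Prod.fst_inv, ha r, Prod.inv_mk]

instance (n : ℕ) : TopologicalSpace (DihedralGroup n) := ⊥
instance (n : ℕ) : DiscreteTopology (DihedralGroup n) := ⟨rfl⟩
instance (p q : ℕ) : TopologicalSpace (Wgrp p q) := ⊥
instance (p q : ℕ) : DiscreteTopology (Wgrp p q) := ⟨rfl⟩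

variable (p q : ℕ) (V : Type*) (R : Set (V × V))

/-- The coordinate projection `π_v : G_Γ → D_p` at a vertex `v`. -/
def vProj (v : V) : ↥(GGamma p q V R) →* DihedralGroup p :=
  (Pi.evalMonoidHom (fun _ : V => DihedralGroup p) v).comp
    ((MonoidHom.fst _ _).comp (GGamma p q V R).subtype)

/-- The coordinate projection `π_r : G_Γ → W` at an edge `r`. -/
def eProj (r : R) : ↥(GGamma p q V R) →* Wgrp p q :=
  (Pi.evalMonoidHom (fun _ : R => Wgrp p q) r).comp
    ((MonoidHom.snd _ _).comp (GGamma p q V R).subtype)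

variable (I : Type*)

/-- The coordinate projection `π_v : G_Γ × C_2^I → D_p` at a vertex `v`. -/
def vProjK (v : V) : (↥(GGamma p q V R) × (I → ℤˣ)) →* DihedralGroup p :=
  (vProj p q V R v).comp (MonoidHom.fst _ _)

/-- The coordinate projection `π_r : G_Γ × C_2^I → W` at an edge `r`. -/
def eProjK (r : R) : (↥(GGamma p q V R) × (I → ℤˣ)) →* Wgrp p q :=
  (eProj p q V R r).comp (MonoidHom.fst _ _)

/-- The map `ξ_Γ : G_Γ → C_2^V`, `((a_v), (b_r)) ↦ (τ(a_v))_v`. -/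
def xiGamma : ↥(GGamma p q V R) →* (V → ℤˣ) :=
  Pi.monoidHom fun v => (dihedralSign p).comp (vProj p q V R v)

end

/-!
The vertex coordinates of `φ` are automatic: `π_v ∘ φ` and `π_{f⁻¹ v}` are surjections onto
`D_p` with the same kernel. For an edge `r = f(r')` the two surjections `π_r ∘ φ` and `π_{r'}`
onto the finite group `W` are compared the same way, so it suffices to show
`ker π_{r'} ≤ ker (π_r ∘ φ)`.

Write `x ∈ ker π_{r'}` as a vertex part `s(x_V)`, with `s` the canonical section of
`G_Γ → D_p^V`, times an edge part with values in `C_q^R`. Since `φ` respects the vertex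
kernels and `x` is trivial at both ends of `r'`, `π_r ∘ φ` maps both parts into `C_q ≤ W`. The
vertex part has order dividing `2p`, prime to `q`. A `C_q`-element on a single edge `s ≠ r'` is
inverted by conjugation with a reflection at an end of `s` not on `r'`, while its image commutes
with the image of that reflection inside the abelian `C_q`; as `q` is odd the image is trivial.
Continuity of `φ` passes from finitely supported edge parts to all of them.
-/

open Function SemidirectProduct

theorem MonoidHom.exists_mulEquiv_apply_eq_of_ker_le {G H : Type*} [Group G] [Group H] [Finite H]
    {g₁ g₂ : G →* H} (h₁ : Surjective g₁) (h₂ : Surjective g₂) (hle : g₁.ker ≤ g₂.ker) :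
    ∃ σ : H ≃* H, ∀ x, g₂ x = σ (g₁ x) := by
  set σ := g₁.liftOfSurjective h₁ ⟨g₂, hle⟩
  have hσ : ∀ x, σ (g₁ x) = g₂ x := g₁.liftOfRightInverse_comp_apply _ _ ⟨g₂, hle⟩
  have hsurj : Surjective σ := fun y => let ⟨x, hx⟩ := h₂ y; ⟨g₁ x, (hσ x).trans hx⟩
  exact ⟨MulEquiv.ofBijective σ ⟨Finite.injective_iff_surjective.mpr hsurj, hsurj⟩,
    fun x => (hσ x).symm⟩

open Topology in
theorem Pi.map_eq_one_of_continuous_of_mulSingle {ι N : Type*} [DecidableEq ι] {M : ι → Type*}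
    [∀ i, Group (M i)] [∀ i, TopologicalSpace (M i)] [∀ i, DiscreteTopology (M i)] [Group N]
    [TopologicalSpace N] [DiscreteTopology N] {ψ : (∀ i, M i) →* N} (hψ : Continuous ψ) {S : Set ι}
    (hS : ∀ i ∉ S, ∀ g, ψ (Pi.mulSingle i g) = 1) {c : ∀ i, M i} (hc : ∀ i ∈ S, c i = 1) :
    ψ c = 1 := by
  obtain ⟨I, t, ht, hIt⟩ : ∃ I : Finset ι, ∃ t : ∀ i, Set (M i), (∀ i, t i ∈ 𝓝 1) ∧
      Set.pi I t ⊆ ψ ⁻¹' {1} := by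
    rw [← Filter.mem_pi', ← nhds_pi]
    exact ((isOpen_discrete _).preimage hψ).mem_nhds (map_one ψ)
  set cI : ∀ i, M i := fun i => if i ∈ I then c i else 1
  have hcI : cI ∈ ψ.ker := by
    refine Submonoid.pi_mem_of_mulSingle_mem_aux I cI (fun i hi => if_neg hi) fun i _ => ?_
    by_cases hiS : i ∈ S
    · have : cI i = 1 := by simp only [cI, hc i hiS, ite_self]
      rw [this, Pi.mulSingle_one]
      exact one_mem _
    · exact hS i hiS _
  have hrest : cI⁻¹ * c ∈ Set.pi I t := fun i hi => by
    simpa only [Pi.mul_apply, Pi.inv_apply, cI, if_pos (Finset.mem_coe.mp hi), inv_mul_cancel]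
      using mem_of_mem_nhds (ht i)
  rw [← mul_inv_cancel_left cI c, map_mul, hcI, hIt hrest, one_mul]

theorem exists_endpoint_ne_of_ne {V : Type*} {R : Set (V × V)} (hloop : ∀ v : V, (v, v) ∉ R)
    (hor : ∀ a b : V, (a, b) ∈ R → (b, a) ∉ R) {s r : V × V} (hs : s ∈ R) (hr : r ∈ R)
    (hsr : s ≠ r) : ∃ w, (w = s.1 ∨ w = s.2) ∧ w ≠ r.1 ∧ w ≠ r.2 := by
  obtain ⟨a, b⟩ := s
  obtain ⟨c, d⟩ := r
  by_contra! h
  have ha := h a (Or.inl rfl)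
  have hb := h b (Or.inr rfl)
  simp only [ne_eq, Prod.mk.injEq] at ha hb hsr
  by_cases hac : a = c <;> by_cases hbc : b = c
  · exact hloop a (by rwa [hbc, ← hac] at hs)
  · exact hsr ⟨hac, hb hbc⟩
  · exact hor _ _ hr (by rwa [ha hac, hbc] at hs)
  · exact hloop d (by rwa [hb hbc, ha hac] at hs)

theorem fst_ne_snd_of_loopless {V : Type*} {R : Set (V × V)} (hloop : ∀ v : V, (v, v) ∉ R)
    {r : V × V} (hr : r ∈ R) : r.1 ≠ r.2 := by
  obtain ⟨a, b⟩ := r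
  rintro (rfl : a = b)
  exact hloop a hr

theorem SemidirectProduct.inl_left_eq_self {N G : Type*} [Group N] [Group G] {φ : G →* MulAut N}
    {w : N ⋊[φ] G} (hw : rightHom w = 1) : inl w.left = w := by
  ext <;> simp [← hw]

theorem dihedralSign_sr {p : ℕ} (i : ZMod p) : dihedralSign p (DihedralGroup.sr i) = -1 := rfl

theorem Wact_apply {p q : ℕ} (a b : DihedralGroup p) (n : Multiplicative (ZMod q)) :
    Wact p q (a, b) n = n ^ ((dihedralSign p a * dihedralSign p b : ℤˣ) : ℤ) := rfl

theorem Wact_mulSingle_sr {p q : ℕ} {V : Type*} [DecidableEq V] {s : V × V} (hs : s.1 ≠ s.2)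
    {w : V} (hw : w = s.1 ∨ w = s.2) (i : ZMod p) (n : Multiplicative (ZMod q)) :
    Wact p q ((Pi.mulSingle w (DihedralGroup.sr i) : V → DihedralGroup p) s.1,
      (Pi.mulSingle w (DihedralGroup.sr i) : V → DihedralGroup p) s.2) n = n⁻¹ := by
  rcases hw with rfl | rfl <;> simp [Wact_apply, hs, hs.symm, dihedralSign_sr]

theorem Wgrp.eq_one_of_pow_eq_one {p q : ℕ} (hq : q.Prime) {k : ℕ} (hk : ¬ q ∣ k)
    {w : Wgrp p q} (hw : w ^ k = 1) (hr : rightHom w = 1) : w = 1 := by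
  have : Fact q.Prime := ⟨hq⟩
  have hcop : (Nat.card (Multiplicative (ZMod q))).Coprime k := by
    rwa [Nat.card_eq_fintype_card, Fintype.card_multiplicative, ZMod.card,
      Nat.Prime.coprime_iff_not_dvd hq]
  rw [← inl_left_eq_self hr, ← map_pow] at hw
  rw [← inl_left_eq_self hr, hcop.pow_left_bijective.injective
    ((inl_injective (hw.trans (map_one _).symm)).trans (one_pow k).symm), map_one]

instance {p q : ℕ} [NeZero p] [NeZero q] : Finite (Wgrp p q) :=
  Finite.of_equiv _ SemidirectProduct.equivProd.symm

namespace GGamma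

variable {p q : ℕ} {V : Type*} {R : Set (V × V)}

theorem rightHom_snd (x : GGamma p q V R) (r : R) :
    rightHom (x.1.2 r) = (x.1.1 r.1.1, x.1.1 r.1.2) :=
  x.2 r

variable (p q V R) in
def vertexSection : (V → DihedralGroup p) →* GGamma p q V R where
  toFun g := ⟨(g, fun r => inr (g r.1.1, g r.1.2)), fun _ => rightHom_inr _⟩
  map_one' := Subtype.ext (Prod.ext rfl (funext fun _ => map_one inr))
  map_mul' g h := Subtype.ext (Prod.ext rfl (funext fun r =>
    map_mul inr (g r.1.1, g r.1.2) (h r.1.1, h r.1.2)))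

@[simp]
theorem vertexSection_fst (g : V → DihedralGroup p) : (vertexSection p q V R g).1.1 = g := rfl

@[simp]
theorem vertexSection_snd (g : V → DihedralGroup p) (r : R) :
    (vertexSection p q V R g).1.2 r = inr (g r.1.1, g r.1.2) := rfl

def edgeEmbed : (R → Multiplicative (ZMod q)) →* GGamma p q V R where
  toFun c := ⟨(1, fun r => inl (c r)), fun _ => rightHom_inl _⟩
  map_one' := Subtype.ext (Prod.ext rfl (funext fun _ => map_one inl))
  map_mul' c d :=
    Subtype.ext (Prod.ext (mul_one 1).symm (funext fun r => map_mul inl (c r) (d r)))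

@[simp]
theorem edgeEmbed_fst (c : R → Multiplicative (ZMod q)) :
    (edgeEmbed c : GGamma p q V R).1.1 = 1 := rfl

@[simp]
theorem edgeEmbed_snd (c : R → Multiplicative (ZMod q)) (r : R) :
    (edgeEmbed c : GGamma p q V R).1.2 r = inl (c r) := rfl

def edgePart (x : GGamma p q V R) (r : R) : Multiplicative (ZMod q) :=
  ((inr (x.1.1 r.1.1, x.1.1 r.1.2))⁻¹ * x.1.2 r).left

theorem vertexSection_mul_edgeEmbed_edgePart (x : GGamma p q V R) :
    vertexSection p q V R x.1.1 * edgeEmbed (edgePart x) = x := by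
  refine Subtype.ext (Prod.ext (by simp) (funext fun r => ?_))
  simp only [Subgroup.coe_mul, Prod.snd_mul, Pi.mul_apply, vertexSection_snd, edgeEmbed_snd]
  rw [edgePart, inl_left_eq_self (by rw [map_mul, map_inv, rightHom_inr, rightHom_snd,
    inv_mul_cancel]), mul_inv_cancel_left]

theorem edgePart_eq_one {x : GGamma p q V R} {r : R} (hx : x.1.2 r = 1) : edgePart x r = 1 := by
  have h := rightHom_snd x r
  rw [hx, map_one] at h
  simp [edgePart, hx, ← h]

theorem vertexSection_conj_edgeEmbed (g : V → DihedralGroup p)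
    (c : R → Multiplicative (ZMod q)) :
    vertexSection p q V R g * edgeEmbed c * (vertexSection p q V R g)⁻¹ =
      edgeEmbed fun r => Wact p q (g r.1.1, g r.1.2) (c r) := by
  refine Subtype.ext (Prod.ext (by simp) (funext fun r => ?_))
  simp only [Subgroup.coe_mul, Subgroup.coe_inv, Prod.snd_mul, Prod.snd_inv, Pi.mul_apply,
    Pi.inv_apply, vertexSection_snd, edgeEmbed_snd]
  rw [← map_inv, ← inl_aut]

theorem continuous_edgeEmbed :
    Continuous (edgeEmbed : (R → Multiplicative (ZMod q)) →* GGamma p q V R) :=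
  continuous_const.prodMk (continuous_pi fun r =>
    continuous_of_discreteTopology.comp (continuous_apply r)) |>.subtype_mk _

theorem eProj_apply (r : R) (x : GGamma p q V R) : eProj p q V R r x = x.1.2 r := rfl

theorem continuous_eProj (r : R) : Continuous (eProj p q V R r) :=
  (continuous_apply r).comp (continuous_snd.comp continuous_subtype_val)

theorem vProj_surjective (v : V) : Surjective (vProj p q V R v) :=
  fun d => ⟨vertexSection p q V R fun _ => d, rfl⟩

theorem eProj_surjective (hloop : ∀ v : V, (v, v) ∉ R) (r : R) :
    Surjective (eProj p q V R r) := by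
  classical
  intro w
  have hne := fst_ne_snd_of_loopless hloop r.2
  refine ⟨edgeEmbed (Pi.mulSingle r w.left : R → Multiplicative (ZMod q)) *
    vertexSection p q V R (Pi.mulSingle r.1.1 w.right.1 * Pi.mulSingle r.1.2 w.right.2), ?_⟩
  simp only [eProj_apply, Subgroup.coe_mul, Prod.snd_mul, Pi.mul_apply, edgeEmbed_snd,
    vertexSection_snd, Pi.mul_apply, Pi.mulSingle_eq_same, Pi.mulSingle_eq_of_ne hne,
    Pi.mulSingle_eq_of_ne hne.symm]
  rw [mul_one, one_mul, inl_left_mul_inr_right]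

variable {ψ : GGamma p q V R →* Wgrp p q} {r : R}

theorem map_vertexSection_eq_one (hq : q.Prime) (hqp : ¬ q ∣ 2 * p)
    (hM : ∀ z : GGamma p q V R, z.1.1 r.1.1 = 1 → z.1.1 r.1.2 = 1 → rightHom (ψ z) = 1)
    {g : V → DihedralGroup p} (h₁ : g r.1.1 = 1) (h₂ : g r.1.2 = 1) :
    ψ (vertexSection p q V R g) = 1 := by
  have hg : g ^ (2 * p) = 1 := funext fun v =>
    Monoid.exponent_dvd_iff_forall_pow_eq_one.mp (by
      rw [DihedralGroup.exponent]; exact Nat.lcm_dvd (dvd_mul_left p 2) (dvd_mul_right 2 p)) (g v)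
  exact Wgrp.eq_one_of_pow_eq_one hq hqp (by rw [← map_pow, ← map_pow, hg, map_one, map_one])
    (hM _ h₁ h₂)

theorem map_edgeEmbed_mulSingle_eq_one [DecidableEq R] (hq : q.Prime) (hq2 : ¬ q ∣ 2)
    (hloop : ∀ v : V, (v, v) ∉ R) (hor : ∀ a b : V, (a, b) ∈ R → (b, a) ∉ R)
    (hM : ∀ z : GGamma p q V R, z.1.1 r.1.1 = 1 → z.1.1 r.1.2 = 1 → rightHom (ψ z) = 1)
    {s : R} (hs : s ≠ r) (n : Multiplicative (ZMod q)) :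
    ψ (edgeEmbed (Pi.mulSingle s n)) = 1 := by
  classical
  obtain ⟨w, hw, hw₁, hw₂⟩ :=
    exists_endpoint_ne_of_ne hloop hor s.2 r.2 (Subtype.coe_injective.ne hs)
  set t := vertexSection p q V R (Pi.mulSingle w (DihedralGroup.sr 0))
  set e : GGamma p q V R := edgeEmbed (Pi.mulSingle s n)
  have hconj : t * e * t⁻¹ = e⁻¹ := by
    rw [vertexSection_conj_edgeEmbed, ← map_inv]
    congr 1
    funext s'
    by_cases h : s' = s
    · subst h
      simp [Wact_mulSingle_sr (fst_ne_snd_of_loopless hloop s'.2) hw]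
    · simp [h]
  have he := hM e rfl rfl
  have ht := hM t (by simp only [t, vertexSection_fst, Pi.mulSingle_eq_of_ne hw₁.symm])
    (by simp only [t, vertexSection_fst, Pi.mulSingle_eq_of_ne hw₂.symm])
  have hcomm : Commute (ψ t) (ψ e) := by
    rw [← inl_left_eq_self ht, ← inl_left_eq_self he]
    exact (Commute.all _ _).map inl
  have hinv : ψ e = (ψ e)⁻¹ := calc
    ψ e = ψ t * ψ e * (ψ t)⁻¹ := hcomm.mul_inv_cancel.symm
    _ = ψ (t * e * t⁻¹) := by rw [map_mul, map_mul, map_inv]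
    _ = (ψ e)⁻¹ := by rw [hconj, map_inv]
  exact Wgrp.eq_one_of_pow_eq_one hq hq2 (by rw [sq]; exact mul_eq_one_iff_eq_inv.mpr hinv) he

theorem map_edgeEmbed_eq_one (hq : q.Prime) (hq2 : ¬ q ∣ 2)
    (hloop : ∀ v : V, (v, v) ∉ R) (hor : ∀ a b : V, (a, b) ∈ R → (b, a) ∉ R)
    (hψ : Continuous ψ)
    (hM : ∀ z : GGamma p q V R, z.1.1 r.1.1 = 1 → z.1.1 r.1.2 = 1 → rightHom (ψ z) = 1)
    {c : R → Multiplicative (ZMod q)} (hc : c r = 1) : ψ (edgeEmbed c) = 1 := by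
  classical
  exact Pi.map_eq_one_of_continuous_of_mulSingle (ψ := ψ.comp edgeEmbed)
    (hψ.comp continuous_edgeEmbed) (S := {r})
    (fun s hs => map_edgeEmbed_mulSingle_eq_one hq hq2 hloop hor hM hs)
    (fun s hs => (Set.mem_singleton_iff.mp hs) ▸ hc)

theorem ker_eProj_le_ker (hq : q.Prime) (hqp : ¬ q ∣ 2 * p)
    (hloop : ∀ v : V, (v, v) ∉ R) (hor : ∀ a b : V, (a, b) ∈ R → (b, a) ∉ R)
    (hψ : Continuous ψ)
    (hM : ∀ z : GGamma p q V R, z.1.1 r.1.1 = 1 → z.1.1 r.1.2 = 1 → rightHom (ψ z) = 1) :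
    (eProj p q V R r).ker ≤ ψ.ker := by
  intro x hx
  rw [MonoidHom.mem_ker, eProj_apply] at hx
  have hends := rightHom_snd x r
  rw [hx, map_one, eq_comm, Prod.mk_eq_one] at hends
  rw [MonoidHom.mem_ker, ← vertexSection_mul_edgeEmbed_edgePart x, map_mul,
    map_vertexSection_eq_one hq hqp hM hends.1 hends.2,
    map_edgeEmbed_eq_one hq (fun h => hqp (h.trans (dvd_mul_right 2 p))) hloop hor hψ hM
      (edgePart_eq_one hx), one_mul]

variable {φ : GGamma p q V R ≃* GGamma p q V R} {f : Equiv.Perm V}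

theorem map_apply_eq_one_of_ker_vProj
    (hker : ∀ v : V, ((vProj p q V R v).ker).map φ.toMonoidHom = (vProj p q V R (f v)).ker)
    {z : GGamma p q V R} {u : V} (hz : z.1.1 u = 1) : (φ z).1.1 (f u) = 1 :=
  (hker u ▸ Subgroup.mem_map_of_mem φ.toMonoidHom hz : φ z ∈ (vProj p q V R (f u)).ker)

theorem exists_mulEquiv_vProj_apply [NeZero p]
    (hker : ∀ v : V, ((vProj p q V R v).ker).map φ.toMonoidHom = (vProj p q V R (f v)).ker)
    (v : V) : ∃ σ : DihedralGroup p ≃* DihedralGroup p,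
      ∀ x : GGamma p q V R, (φ x).1.1 v = σ (x.1.1 (f.symm v)) :=
  MonoidHom.exists_mulEquiv_apply_eq_of_ker_le (g₂ := (vProj p q V R v).comp φ.toMonoidHom)
    (vProj_surjective _) ((vProj_surjective v).comp φ.surjective)
    fun z hz => by
      change (φ z).1.1 v = 1
      simpa using map_apply_eq_one_of_ker_vProj hker hz

theorem exists_mulEquiv_eProj_apply [NeZero p] [NeZero q] (hq : q.Prime) (hqp : ¬ q ∣ 2 * p)
    (hloop : ∀ v : V, (v, v) ∉ R) (hor : ∀ a b : V, (a, b) ∈ R → (b, a) ∉ R)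
    (hφ : Continuous φ)
    (hker : ∀ v : V, ((vProj p q V R v).ker).map φ.toMonoidHom = (vProj p q V R (f v)).ker)
    (r : R) : ∃ σ : Wgrp p q ≃* Wgrp p q, ∀ r' : R, (f r'.1.1, f r'.1.2) = r.1 →
      ∀ x : GGamma p q V R, (φ x).1.2 r = σ (x.1.2 r') := by
  by_cases h : ∃ r' : R, (f r'.1.1, f r'.1.2) = r.1
  · obtain ⟨r', hr'⟩ := h
    have hM (z : GGamma p q V R) (h₁ : z.1.1 r'.1.1 = 1) (h₂ : z.1.1 r'.1.2 = 1) :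
        rightHom ((eProj p q V R r).comp φ.toMonoidHom z) = 1 := by
      rw [MonoidHom.comp_apply, eProj_apply, rightHom_snd, ← hr']
      exact Prod.mk_eq_one.mpr
        ⟨map_apply_eq_one_of_ker_vProj hker h₁, map_apply_eq_one_of_ker_vProj hker h₂⟩
    obtain ⟨σ, hσ⟩ := MonoidHom.exists_mulEquiv_apply_eq_of_ker_le
      (g₂ := (eProj p q V R r).comp φ.toMonoidHom) (eProj_surjective hloop r')
      ((eProj_surjective hloop r).comp φ.surjective)
      (ker_eProj_le_ker hq hqp hloop hor ((continuous_eProj r).comp hφ) hM)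
    refine ⟨σ, fun r'' hr'' x => ?_⟩
    have hends := hr''.trans hr'.symm
    simp only [Prod.mk.injEq, f.injective.eq_iff] at hends
    obtain rfl : r'' = r' := Subtype.ext (Prod.ext hends.1 hends.2)
    exact hσ x
  · exact ⟨MulEquiv.refl _, fun r' hr' => absurd ⟨r', hr'⟩ h⟩

end GGamma

theorem statement_13_general (p q : ℕ) (hp : p.Prime) (hq : q.Prime) (hqo : Odd q)
    (hpq : p ≠ q) (V : Type) (R : Set (V × V))
    (hloop : ∀ v : V, (v, v) ∉ R) (hor : ∀ a b : V, (a, b) ∈ R → (b, a) ∉ R)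
    (φ : ↥(GGamma p q V R) ≃* ↥(GGamma p q V R)) (hφc : Continuous ⇑φ)
    (f : Equiv.Perm V)
    (hker : ∀ v : V, ((vProj p q V R v).ker).map φ.toMonoidHom = (vProj p q V R (f v)).ker) :
    ∃ (σv : V → (DihedralGroup p ≃* DihedralGroup p)) (σr : R → (Wgrp p q ≃* Wgrp p q)),
      ∀ x : ↥(GGamma p q V R),
        (∀ v : V, (φ x : (V → DihedralGroup p) × (R → Wgrp p q)).1 v =
          σv v ((x : (V → DihedralGroup p) × (R → Wgrp p q)).1 (f.symm v))) ∧
        (∀ r r' : R, (f (r' : V × V).1, f (r' : V × V).2) = (r : V × V) →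
          (φ x : (V → DihedralGroup p) × (R → Wgrp p q)).2 r =
            σr r ((x : (V → DihedralGroup p) × (R → Wgrp p q)).2 r')) := by
  have : NeZero p := ⟨hp.ne_zero⟩
  have : NeZero q := ⟨hq.ne_zero⟩
  have hqp : ¬ q ∣ 2 * p := by
    rw [Nat.Prime.dvd_mul hq, Nat.prime_dvd_prime_iff_eq hq Nat.prime_two,
      Nat.prime_dvd_prime_iff_eq hq hp]
    rintro (rfl | rfl)
    exacts [Nat.not_even_iff_odd.mpr hqo even_two, hpq rfl]
  choose σv hσv using GGamma.exists_mulEquiv_vProj_apply hker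
  choose σr hσr using GGamma.exists_mulEquiv_eProj_apply hq hqp hloop hor hφc hker
  exact ⟨σv, σr, fun x => ⟨fun v => hσv v x, fun r r' hr => hσr r r' hr x⟩⟩

/-- Let `Γ = (V, R)` be a graph, `φ` a continuous automorphism of `G_Γ`,
and `f` the automorphism of `Γ` determined by `φ(ker π_v) = ker π_{f(v)}`.  Then there are
automorphisms `σ_v ∈ Aut(D_p)` (for `v ∈ V`) and `σ_r ∈ Aut(W)` (for `r ∈ R`) such that
`φ = σ̄ ∘ φ_f`, where `φ_f` is the coordinate-change automorphism associated to `f` and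
`σ̄` applies the `σ_v`, `σ_r` coordinatewise; equivalently, for every `x ∈ G_Γ`:
`(φ x)_v = σ_v (x_{f⁻¹ v})` for each vertex `v`, and `(φ x)_r = σ_r (x_{f⁻¹ r})` for each
edge `r` (where `f⁻¹ r` is the edge `r'` with `f(r') = r`). -/
theorem statement_13 (p q : ℕ) (hp : p.Prime) (hq : q.Prime) (hpo : Odd p) (hqo : Odd q)
    (hpq : p ≠ q) (V : Type) (R : Set (V × V))
    (hloop : ∀ v : V, (v, v) ∉ R) (hor : ∀ a b : V, (a, b) ∈ R → (b, a) ∉ R)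
    (φ : ↥(GGamma p q V R) ≃* ↥(GGamma p q V R)) (hφc : Continuous ⇑φ)
    (f : Equiv.Perm V)
    (hfR : ∀ a b : V, (a, b) ∈ R ↔ (f a, f b) ∈ R)
    (hker : ∀ v : V, ((vProj p q V R v).ker).map φ.toMonoidHom = (vProj p q V R (f v)).ker) :
    ∃ (σv : V → (DihedralGroup p ≃* DihedralGroup p)) (σr : R → (Wgrp p q ≃* Wgrp p q)),
      ∀ x : ↥(GGamma p q V R),
        (∀ v : V, (φ x : (V → DihedralGroup p) × (R → Wgrp p q)).1 v =
          σv v ((x : (V → DihedralGroup p) × (R → Wgrp p q)).1 (f.symm v))) ∧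
        (∀ r r' : R, (f (r' : V × V).1, f (r' : V × V).2) = (r : V × V) →
          (φ x : (V → DihedralGroup p) × (R → Wgrp p q)).2 r =
            σr r ((x : (V → DihedralGroup p) × (R → Wgrp p q)).2 r')) :=
  statement_13_general p q hp hq hqo hpq V R hloop hor φ hφc f hker
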